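/- (Proposition 4.7.) Let n ≥ 1 and 0 ≤ k ≤ n be integers, and let D = (d; m+1, ..., m+1, m, ..., m) ∈ ℤ^{1+n} be the balanced class whose first k multiplicities equal m+1 and whose remaining n−k multiplicities equal m. Assume d ≥ 0, m ≥ 0, 1 ≤ χ(D) < (n−1)/8, and that ℓ := min(k, n−k) satisfies ℓ < (1/2)(n − √((8χ(D)+1)n)). Then 2(B·D) < B·K, i.e., 2(√n · d − (k(m+1) + (n−k)m)) < n − 3√n. -/

import Mathlib

/-!
Divisor classes on the blowup of `P^2` at `n` very general points are modeled as
pairs `(d, m) : ℤ × (Fin n → ℤ)` representing `dH - ∑ mᵢ Eᵢ`.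
-/

/-- The intersection pairing `D · D' = d d' - ∑ mᵢ mᵢ'`. -/
def pairZ {n : ℕ} (D D' : ℤ × (Fin n → ℤ)) : ℤ :=
  D.1 * D'.1 - ∑ i, D.2 i * D'.2 i

/-- The canonical class `K = -3H + ∑ Eᵢ`, i.e. `(-3; -1, …, -1)`. -/
def KD (n : ℕ) : ℤ × (Fin n → ℤ) := (-3, fun _ => -1)

/-- The Riemann–Roch Euler characteristic `χ(D) = 1 + (1/2) D·(D - K)`. -/
def chi {n : ℕ} (D : ℤ × (Fin n → ℤ)) : ℚ :=
  1 + (pairZ D (D - KD n) : ℚ) / 2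

/-- The real intersection pairing on `ℝ^{1+n}`. -/
def pairR {n : ℕ} (x y : ℝ × (Fin n → ℝ)) : ℝ :=
  x.1 * y.1 - ∑ i, x.2 i * y.2 i

/-- The real vector associated to an integral divisor class. -/
def toR {n : ℕ} (D : ℤ × (Fin n → ℤ)) : ℝ × (Fin n → ℝ) :=
  ((D.1 : ℝ), fun i => (D.2 i : ℝ))

/-- The (real) class `A_t = tH - E = (t; 1, …, 1)`; `B = A_{√n}`. -/
def At (n : ℕ) (t : ℝ) : ℝ × (Fin n → ℝ) := (t, fun _ => 1)


/-!
Writing `S = ∑ mᵢ`, the inequality `2 B·D < B·K` reads `√n (2d + 3) < n + 2S`, whose right side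
is nonnegative. Since `8χ(D) + 1 = (2d + 3)² - 4 ∑ mᵢ(mᵢ + 1)`, after squaring it becomes
`n (8χ(D) + 1) < n² - 4 (n ∑ mᵢ² - S²)`. For the balanced class `n ∑ mᵢ² - S² = k(n - k)`, so the
right side is `(n - 2k)² = (n - 2ℓ)²`, and the hypothesis on `ℓ` is exactly this inequality.
-/

open Finset

def balancedMults (n k : ℕ) (m : ℤ) : Fin n → ℤ :=
  fun i => if (i : ℕ) < k then m + 1 else m

/-- `n²` times the variance of the multiplicities. -/
def dispersion {n : ℕ} (μ : Fin n → ℤ) : ℤ :=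
  n * ∑ i, μ i ^ 2 - (∑ i, μ i) ^ 2

section Balanced

variable {n k : ℕ} (m : ℤ)

lemma sum_balancedMults_apply {M : Type*} [AddCommMonoid M] (hk : k ≤ n) (f : ℤ → M) :
    ∑ i, f (balancedMults n k m i) = k • f (m + 1) + (n - k) • f m := by
  have hcard : #{i : Fin n | (i : ℕ) < k} = k := by
    rw [Fin.card_filter_val_lt, min_eq_right hk]
  have hcard' : #{i : Fin n | ¬ (i : ℕ) < k} = n - k := by
    rw [filter_not, card_sdiff_of_subset (filter_subset _ _), hcard, card_univ, Fintype.card_fin]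
  simp only [balancedMults, apply_ite f, sum_ite, sum_const, hcard, hcard']

lemma sum_balancedMults (hk : k ≤ n) : ∑ i, balancedMults n k m i = n * m + k := by
  refine (sum_balancedMults_apply m hk id).trans ?_
  simp only [id, nsmul_eq_mul, Nat.cast_sub hk]
  ring

lemma dispersion_balancedMults (hk : k ≤ n) :
    dispersion (balancedMults n k m) = k * (n - k) := by
  rw [dispersion, sum_balancedMults m hk, sum_balancedMults_apply m hk (· ^ 2)]
  simp only [nsmul_eq_mul, Nat.cast_sub hk]
  ring

end Balanced

lemma sq_sub_two_mul_min {R : Type*} [LinearOrder R] [CommRing R] (a b : R) :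
    (a - 2 * min b (a - b)) ^ 2 = a ^ 2 - 4 * b * (a - b) := by
  rcases min_cases b (a - b) with ⟨h, -⟩ | ⟨h, -⟩ <;> rw [h] <;> ring

section Pairing

variable {n : ℕ}

lemma pairR_At_toR (t : ℝ) (D : ℤ × (Fin n → ℤ)) :
    pairR (At n t) (toR D) = t * D.1 - ∑ i, (D.2 i : ℝ) := by
  simp [pairR, At, toR]

lemma pairR_At_toR_KD (t : ℝ) : pairR (At n t) (toR (KD n)) = n - 3 * t := by
  simp [pairR_At_toR, KD]
  ring

lemma pairZ_sub_KD (D : ℤ × (Fin n → ℤ)) :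
    pairZ D (D - KD n) = D.1 * (D.1 + 3) - ∑ i, (D.2 i ^ 2 + D.2 i) := by
  simp only [pairZ, KD, Prod.fst_sub, Prod.snd_sub, Pi.sub_apply]
  rw [show ∑ i, D.2 i * (D.2 i - -1) = ∑ i, (D.2 i ^ 2 + D.2 i) from
    sum_congr rfl fun i _ => by ring]
  ring

lemma eight_mul_chi_add_one (D : ℤ × (Fin n → ℤ)) :
    8 * (chi D : ℝ) + 1 = (2 * D.1 + 3) ^ 2 - 4 * ∑ i, ((D.2 i : ℝ) ^ 2 + D.2 i) := by
  rw [chi, pairZ_sub_KD]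
  push_cast
  ring

theorem two_mul_pairR_At_sqrt_lt_of_dispersion (D : ℤ × (Fin n → ℤ))
    (hS : 0 ≤ (n : ℤ) + 2 * ∑ i, D.2 i)
    (h : (8 * (chi D : ℝ) + 1) * n < (n : ℝ) ^ 2 - 4 * dispersion D.2) :
    2 * pairR (At n √n) (toR D) < pairR (At n √n) (toR (KD n)) := by
  rw [pairR_At_toR, pairR_At_toR_KD]
  rw [eight_mul_chi_add_one, dispersion] at h
  have hS' : (0 : ℝ) ≤ n + 2 * ∑ i, (D.2 i : ℝ) := by exact_mod_cast hS
  have key : (√n * (2 * D.1 + 3)) ^ 2 < (n + 2 * ∑ i, (D.2 i : ℝ)) ^ 2 := by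
    rw [mul_pow, Real.sq_sqrt n.cast_nonneg]
    push_cast at h
    simp only [sum_add_distrib, mul_add, mul_sub] at h ⊢
    linarith
  linarith [lt_of_pow_lt_pow_left₀ 2 hS' key]

end Pairing

theorem two_B_dot_lt_of_general (n : ℕ) (k : ℕ) (hk : k ≤ n) (d m : ℤ)
    (D : ℤ × (Fin n → ℤ))
    (hD : D = (d, fun i : Fin n => if (i : ℕ) < k then m + 1 else m))
    (hm : 0 ≤ m)
    (hl : (min k (n - k) : ℝ) <
      (1 / 2) * ((n : ℝ) - Real.sqrt ((8 * (chi D : ℝ) + 1) * n))) :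
    2 * pairR (At n (Real.sqrt n)) (toR D) <
      pairR (At n (Real.sqrt n)) (toR (KD n)) := by
  change D = (d, balancedMults n k m) at hD
  subst hD
  apply two_mul_pairR_At_sqrt_lt_of_dispersion
  · rw [sum_balancedMults m hk]
    positivity
  · have hsq : _ < ((n : ℝ) - 2 * min (k : ℝ) (n - k)) ^ 2 := Real.lt_sq_of_sqrt_lt (by linarith)
    rw [sq_sub_two_mul_min] at hsq
    rw [dispersion_balancedMults m hk]
    push_cast
    linarith

/-- Proposition 4.7: a balanced class `D = dH - (m+1)E' - mE''` with `d ≥ 0`,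
`m ≥ 0`, `1 ≤ χ(D) < (n-1)/8` which is fewer than `(1/2)(n - √((8χ(D)+1)n))`
steps away from having equal multiplicities satisfies `2 B·D < B·K`. -/
theorem two_B_dot_lt_of (n : ℕ) (hn : 1 ≤ n) (k : ℕ) (hk : k ≤ n) (d m : ℤ)
    (D : ℤ × (Fin n → ℤ))
    (hD : D = (d, fun i : Fin n => if (i : ℕ) < k then m + 1 else m))
    (hd : 0 ≤ d) (hm : 0 ≤ m)
    (hchi1 : 1 ≤ chi D) (hchi2 : chi D < ((n : ℚ) - 1) / 8)
    (hl : (min k (n - k) : ℝ) <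
      (1 / 2) * ((n : ℝ) - Real.sqrt ((8 * (chi D : ℝ) + 1) * n))) :
    2 * pairR (At n (Real.sqrt n)) (toR D) <
      pairR (At n (Real.sqrt n)) (toR (KD n)) :=
  two_B_dot_lt_of_general n k hk d m D hD hm hl
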